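/- Let L ≥ 4 be an even integer and define, for real δ ∈ [0,1], f̀_L(δ) = (1/L)·log(Σ_{j=L/2}^{L} C(L,j)) − h(δ) − (1/L)·log C(L,L/2) + (δ/2)·log(L/2) + (1/L)·h(δL/4), where C(a,b) is the binomial coefficient. Then f̀_L(0) > 0 and f̀_L(1/L) < 0; consequently there exists δ̀ ∈ (0, 1/L) such that f̀_L(δ̀) = 0 and f̀_L(δ) > 0 for all δ with 0 ≤ δ < δ̀. -/

import Mathlib

open Finset Filter

/-- Weight (number of ones) of a binary word. -/
def wt {n : ℕ} (x : Fin n → Bool) : ℕ := (Finset.univ.filter fun i => x i = true).card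

/-- The index (in a word of length `m * L`) of position `j` of subblock `i`. -/
def subIdx (m L : ℕ) (i : Fin m) (j : Fin L) : Fin (m * L) :=
  ⟨i.val * L + j.val, by
    have hj : j.val < L := j.isLt
    have hi : i.val + 1 ≤ m := i.isLt
    calc i.val * L + j.val < i.val * L + L := Nat.add_lt_add_left hj _
      _ = (i.val + 1) * L := by ring
      _ ≤ m * L := Nat.mul_le_mul hi (Nat.le_refl L)⟩

/-- The `i`-th subblock (of length `L`) of a binary word of length `m * L`. -/
def subblock (m L : ℕ) (x : Fin (m * L) → Bool) (i : Fin m) : Fin L → Bool :=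
  fun j => x (subIdx m L i j)

/-- The CSCC space: binary words of length `m * L` each of whose `m` subblocks of
length `L` has weight exactly `w`. -/
def CSCCspace (m L w : ℕ) : Set (Fin (m * L) → Bool) :=
  {x | ∀ i : Fin m, wt (subblock m L x i) = w}

/-- The SECC space: binary words of length `m * L` each of whose `m` subblocks of
length `L` has weight at least `w`. -/
def SECCspace (m L w : ℕ) : Set (Fin (m * L) → Bool) :=
  {x | ∀ i : Fin m, w ≤ wt (subblock m L x i)}

/-- A code with minimum distance `d` inside the space `Sp`. -/
def isCode {n : ℕ} (Sp : Set (Fin n → Bool)) (d : ℕ) (C : Finset (Fin n → Bool)) : Prop :=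
  (↑C : Set (Fin n → Bool)) ⊆ Sp ∧ ∀ x ∈ C, ∀ y ∈ C, x ≠ y → d ≤ hammingDist x y

/-- The ball of radius `t` around `x`, taken inside the space `Sp`. -/
def ball {n : ℕ} (Sp : Set (Fin n → Bool)) (x : Fin n → Bool) (t : ℕ) :
    Set (Fin n → Bool) :=
  {y | y ∈ Sp ∧ hammingDist x y ≤ t}

/-- `C(m,L,d,w)`: the maximum size of an `(m,L,d,w)`-CSCC. -/
noncomputable def maxCSCC (m L d w : ℕ) : ℕ :=
  sSup {k | ∃ C : Finset (Fin (m * L) → Bool), isCode (CSCCspace m L w) d C ∧ C.card = k}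

/-- `S(m,L,d,w)`: the maximum size of an `(m,L,d,w)`-SECC. -/
noncomputable def maxSECC (m L d w : ℕ) : ℕ :=
  sSup {k | ∃ C : Finset (Fin (m * L) → Bool), isCode (SECCspace m L w) d C ∧ C.card = k}

/-- `A(n,d,w)`: the maximum size of a constant weight code. -/
noncomputable def maxCWC (n d w : ℕ) : ℕ :=
  sSup {k | ∃ C : Finset (Fin n → Bool), isCode {x | wt x = w} d C ∧ C.card = k}

/-- `H(n,d,w)`: the maximum size of a heavy weight code. -/
noncomputable def maxHWC (n d w : ℕ) : ℕ :=
  sSup {k | ∃ C : Finset (Fin n → Bool), isCode {x | w ≤ wt x} d C ∧ C.card = k}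

/-- `A(n,d)`: the maximum size of a binary code of length `n` and distance `d`. -/
noncomputable def maxBinary (n d : ℕ) : ℕ :=
  sSup {k | ∃ C : Finset (Fin n → Bool),
    (∀ x ∈ C, ∀ y ∈ C, x ≠ y → d ≤ hammingDist x y) ∧ C.card = k}

/-- `A_q(n,d)`: the maximum size of a `q`-ary code of length `n` and distance `d`. -/
noncomputable def maxQary (q n d : ℕ) : ℕ :=
  sSup {k | ∃ C : Finset (Fin n → Fin q),
    (∀ x ∈ C, ∀ y ∈ C, x ≠ y → d ≤ hammingDist x y) ∧ C.card = k}

/-- The size of a radius-`r` CSCC ball: the sum over all tuples `(u_1, …, u_m)` with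
`0 ≤ u_i ≤ min{w, L-w}` and `2(u_1 + ⋯ + u_m) ≤ r` of `∏ i, C(w,u_i)·C(L-w,u_i)`. -/
def csccBallSize (m L w r : ℕ) : ℕ :=
  ∑ u ∈ (Finset.univ : Finset (Fin m → Fin (min w (L - w) + 1))).filter
      (fun u => 2 * (∑ i, (u i : ℕ)) ≤ r),
    ∏ i, (w.choose (u i : ℕ)) * ((L - w).choose (u i : ℕ))

/-- The binary entropy function (base-2 logarithms, `h 0 = h 1 = 0`). -/
noncomputable def binent (p : ℝ) : ℝ :=
  -(p * Real.logb 2 p) - (1 - p) * Real.logb 2 (1 - p)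

/-- The asymptotic CSCC rate `γ(L,δ,w/L)`. -/
noncomputable def gammaRate (L : ℕ) (δ : ℝ) (w : ℕ) : ℝ :=
  Filter.limsup (fun m : ℕ =>
    Real.logb 2 (maxCSCC m L ⌊(m : ℝ) * L * δ⌋₊ w) / ((m : ℝ) * L)) Filter.atTop

/-- The asymptotic SECC rate `σ(L,δ,w/L)`. -/
noncomputable def sigmaRate (L : ℕ) (δ : ℝ) (w : ℕ) : ℝ :=
  Filter.limsup (fun m : ℕ =>
    Real.logb 2 (maxSECC m L ⌊(m : ℝ) * L * δ⌋₊ w) / ((m : ℝ) * L)) Filter.atTop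
/-- The function `f̀_L(δ) = (1/L)·log(Σ_{j=L/2}^{L} C(L,j)) − h(δ)
    − (1/L)·log C(L,L/2) + (δ/2)·log(L/2) + (1/L)·h(δL/4)`. -/
noncomputable def fGrave (L : ℕ) (δ : ℝ) : ℝ :=
  (1 / (L : ℝ)) * Real.logb 2 ((∑ j ∈ Finset.Icc (L / 2) L, L.choose j : ℕ))
    - binent δ - (1 / (L : ℝ)) * Real.logb 2 (L.choose (L / 2))
    + (δ / 2) * Real.logb 2 ((L : ℝ) / 2) + (1 / (L : ℝ)) * binent (δ * (L : ℝ) / 4)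

/-!
At `δ = 0` the entropy terms vanish, and `f̀_L(0) = (log S - log C(L, L/2)) / L > 0` because the
sum `S` contains `C(L, L/2)` and `C(L, L) = 1`. At `δ = 1/L` the last term is `h(1/4)/L` with
`h(1/4) < h(1/2) = 1`. Combining `log S ≤ L`, the central binomial bound
`C(2n, n)² ≥ 16ⁿ / (4n)` and `L·h(1/L) ≥ 1 + log L` (Bernoulli: `(1 + 1/(L-1))^(L-1) ≥ 2`), all
the `log L` terms cancel and `L·f̀_L(1/L) ≤ h(1/4) - 1 < 0`. The root `δ̀` is the least zero of
the continuous function `f̀_L` on `[0, 1/L]`; by the intermediate value theorem `f̀_L` has no sign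
change, hence stays positive, before it.
-/

open Real

theorem ContinuousOn.exists_mem_Ioo_eq_zero_forall_pos
    {α β : Type*} [ConditionallyCompleteLinearOrder α] [TopologicalSpace α] [OrderTopology α]
    [DenselyOrdered α] [LinearOrder β] [Zero β] [TopologicalSpace β] [OrderClosedTopology β]
    {f : α → β} {a b : α} (hab : a ≤ b) (hf : ContinuousOn f (Set.Icc a b))
    (ha : 0 < f a) (hb : f b < 0) :
    ∃ c ∈ Set.Ioo a b, f c = 0 ∧ ∀ x ∈ Set.Ico a c, 0 < f x := by
  set K := Set.Icc a b ∩ f ⁻¹' {0}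
  have hKclosed : IsClosed K := hf.preimage_isClosed_of_isClosed isClosed_Icc isClosed_singleton
  have hKbdd : BddBelow K := ⟨a, fun _ hx => hx.1.1⟩
  have exists_zero_le {x : α} (hx : x ∈ Set.Icc a b) (hfx : f x ≤ 0) : ∃ y ∈ K, y ≤ x := by
    obtain ⟨y, hy, hfy⟩ := intermediate_value_Icc' hx.1 (hf.mono (Set.Icc_subset_Icc_right hx.2))
      ⟨hfx, ha.le⟩
    exact ⟨y, ⟨⟨hy.1, hy.2.trans hx.2⟩, hfy⟩, hy.2⟩
  obtain ⟨y, hyK, -⟩ := exists_zero_le ⟨hab, le_rfl⟩ hb.le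
  have hcK : sInf K ∈ K := hKclosed.csInf_mem ⟨y, hyK⟩ hKbdd
  have hbefore : ∀ x ∈ Set.Ico a (sInf K), 0 < f x := by
    intro x hx
    by_contra! hfx
    obtain ⟨z, hzK, hzx⟩ := exists_zero_le ⟨hx.1, hx.2.le.trans hcK.1.2⟩ hfx
    exact (csInf_le hKbdd hzK).not_gt (hzx.trans_lt hx.2)
  refine ⟨sInf K, ⟨?_, ?_⟩, hcK.2, hbefore⟩
  · exact hcK.1.1.lt_of_ne fun h => (h ▸ ha).ne' hcK.2
  · exact hcK.1.2.lt_of_ne fun h => (h ▸ hb).ne hcK.2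

lemma Nat.sixteen_pow_le_four_mul_mul_centralBinom_sq {n : ℕ} (hn : 1 ≤ n) :
    16 ^ n ≤ 4 * n * n.centralBinom ^ 2 := by
  induction n, hn using Nat.le_induction with
  | base => simp [Nat.centralBinom]
  | succ k hk ih =>
    refine Nat.le_of_mul_le_mul_left (?_ : (k + 1) ^ 2 * _ ≤ (k + 1) ^ 2 * _) (by positivity)
    calc (k + 1) ^ 2 * 16 ^ (k + 1) = 16 * (k + 1) ^ 2 * 16 ^ k := by ring
      _ ≤ 16 * (k + 1) ^ 2 * (4 * k * k.centralBinom ^ 2) := Nat.mul_le_mul_left _ ih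
      _ ≤ 4 * (k + 1) * (2 * (2 * k + 1) * k.centralBinom) ^ 2 := by
        nlinarith [sq_nonneg k.centralBinom]
      _ = (k + 1) ^ 2 * (4 * (k + 1) * (k + 1).centralBinom ^ 2) := by
        rw [← Nat.succ_mul_centralBinom_succ]; ring

lemma two_mul_sub_logb_le_logb_centralBinom {n : ℕ} (hn : 1 ≤ n) :
    2 * n - logb 2 (4 * n) / 2 ≤ logb 2 n.centralBinom := by
  have hcast : ((16 : ℕ) : ℝ) ^ n ≤ 4 * n * (n.centralBinom : ℝ) ^ 2 := by
    exact_mod_cast Nat.sixteen_pow_le_four_mul_mul_centralBinom_sq hn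
  have hC : (0 : ℝ) < n.centralBinom := by exact_mod_cast n.centralBinom_pos
  have hlog := logb_le_logb_of_le (b := 2) one_lt_two (by positivity) hcast
  rw [logb_mul (by positivity) (by positivity), logb_pow, logb_pow,
    show ((16 : ℕ) : ℝ) = 2 ^ (4 : ℕ) by norm_num, logb_pow, logb_self_eq_one one_lt_two] at hlog
  push_cast at hlog
  linarith

lemma Nat.choose_half_lt_sum_Icc_choose {L : ℕ} (hL : 1 ≤ L) :
    L.choose (L / 2) < ∑ j ∈ Finset.Icc (L / 2) L, L.choose j :=
  Finset.single_lt_sum (j := L) (by omega) (Finset.mem_Icc.2 ⟨le_rfl, Nat.div_le_self L 2⟩)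
    (Finset.mem_Icc.2 ⟨Nat.div_le_self L 2, le_rfl⟩) (by simp) (fun _ _ _ => Nat.zero_le _)

lemma Nat.sum_Icc_choose_le_two_pow (a L : ℕ) : ∑ j ∈ Finset.Icc a L, L.choose j ≤ 2 ^ L :=
  Nat.sum_range_choose L ▸ Finset.sum_le_sum_of_subset
    (fun _ hj => Finset.mem_range.2 (Nat.lt_succ_of_le (Finset.mem_Icc.1 hj).2))

lemma binent_eq_binEntropy_div_log_two (p : ℝ) : binent p = binEntropy p / log 2 := by
  simp only [binent, binEntropy, logb, log_inv]
  ring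

@[fun_prop]
lemma continuous_binent : Continuous binent := by
  simp only [funext binent_eq_binEntropy_div_log_two]
  fun_prop

lemma binent_lt_one {p : ℝ} (hp : p ≠ 1 / 2) : binent p < 1 := by
  rw [binent_eq_binEntropy_div_log_two, div_lt_one (log_pos one_lt_two)]
  exact binEntropy_lt_log_two.2 (by simpa using hp)

lemma mul_binent_one_div {x : ℝ} (hx : 1 < x) :
    x * binent (1 / x) = logb 2 x + (x - 1) * logb 2 (x / (x - 1)) := by
  have hx0 : x ≠ 0 := by positivity
  have hx1 : x - 1 ≠ 0 := by linarith
  rw [binent, one_sub_div hx0, one_div, logb_inv, logb_div hx1 hx0, logb_div hx0 hx1]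
  field_simp
  ring

lemma one_add_logb_le_mul_binent_one_div {x : ℝ} (hx : 2 ≤ x) :
    1 + logb 2 x ≤ x * binent (1 / x) := by
  have hx1 : 0 < x - 1 := by linarith
  have hbern : 2 ≤ (x / (x - 1)) ^ (x - 1) := by
    have := one_add_mul_self_le_rpow_one_add (s := 1 / (x - 1))
      (neg_one_lt_zero.trans (by positivity)).le (p := x - 1) (by linarith)
    rwa [mul_one_div_cancel hx1.ne', one_add_div hx1.ne', sub_add_cancel, one_add_one_eq_two]
      at this
  have hlog := logb_le_logb_of_le (b := 2) one_lt_two two_pos hbern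
  rw [logb_self_eq_one one_lt_two, logb_rpow_eq_mul_logb_of_pos (by positivity)] at hlog
  rw [mul_binent_one_div (by linarith)]
  linarith

lemma continuous_fGrave (L : ℕ) : Continuous (fGrave L) := by
  unfold fGrave
  fun_prop

lemma fGrave_zero_pos {L : ℕ} (hL : 1 ≤ L) : 0 < fGrave L 0 := by
  have hC : (0 : ℝ) < L.choose (L / 2) := by exact_mod_cast Nat.choose_pos (Nat.div_le_self L 2)
  have hCS : (L.choose (L / 2) : ℝ) < (∑ j ∈ Icc (L / 2) L, L.choose j : ℕ) := by
    exact_mod_cast Nat.choose_half_lt_sum_Icc_choose hL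
  have hlog := logb_lt_logb one_lt_two hC hCS
  have hf0 : fGrave L 0 = (logb 2 (∑ j ∈ Icc (L / 2) L, L.choose j : ℕ)
      - logb 2 (L.choose (L / 2))) / L := by
    simp only [fGrave, binent, one_div, logb_zero, logb_one, mul_zero, neg_zero, sub_zero,
      sub_self, zero_div, zero_mul, add_zero]
    ring
  rw [hf0]
  exact div_pos (sub_pos.2 hlog) (by exact_mod_cast hL)

lemma fGrave_one_div_neg {L : ℕ} (hL : 2 ≤ L) (hLe : Even L) : fGrave L (1 / L) < 0 := by
  obtain ⟨n, hn⟩ := hLe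
  have hL' : (2 : ℝ) ≤ L := by exact_mod_cast hL
  have hS : logb 2 (∑ j ∈ Icc (L / 2) L, L.choose j : ℕ) ≤ L := by
    have hS0 : 0 < ∑ j ∈ Icc (L / 2) L, L.choose j :=
      (Nat.choose_half_lt_sum_Icc_choose (by omega)).trans_le' (Nat.zero_le _)
    calc logb 2 (∑ j ∈ Icc (L / 2) L, L.choose j : ℕ)
        ≤ logb 2 ((2 : ℕ) ^ L : ℕ) := logb_le_logb_of_le one_lt_two (by exact_mod_cast hS0)
          (by exact_mod_cast Nat.sum_Icc_choose_le_two_pow _ L)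
      _ = L := by push_cast; rw [logb_pow, logb_self_eq_one one_lt_two, mul_one]
  have hC : L - (1 + logb 2 L) / 2 ≤ logb 2 (L.choose (L / 2)) := by
    have hLn : (L : ℝ) = 2 * n := by exact_mod_cast (by omega : L = 2 * n)
    have hchoose : L.choose (L / 2) = n.centralBinom := by
      rw [Nat.centralBinom_eq_two_mul_choose]
      congr 1 <;> omega
    have h := two_mul_sub_logb_le_logb_centralBinom (n := n) (by omega)
    rw [show (4 : ℝ) * n = 2 * L by rw [hLn]; ring, logb_mul two_ne_zero (by linarith),
      logb_self_eq_one one_lt_two, ← hchoose] at h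
    linarith
  have hH := one_add_logb_le_mul_binent_one_div hL'
  have hhalf : logb 2 ((L : ℝ) / 2) = logb 2 L - 1 := by
    rw [logb_div (by positivity) two_ne_zero, logb_self_eq_one one_lt_two]
  have hquarter := binent_lt_one (p := 1 / 4) (by norm_num)
  have hexpand : L * fGrave L (1 / L) = logb 2 (∑ j ∈ Icc (L / 2) L, L.choose j : ℕ)
      - L * binent (1 / L) - logb 2 (L.choose (L / 2)) + logb 2 ((L : ℝ) / 2) / 2
      + binent (1 / 4) := by
    rw [fGrave, show 1 / (L : ℝ) * L / 4 = 1 / 4 by field_simp]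
    field_simp
  have hscaled : L * fGrave L (1 / L) < 0 := by
    rw [hexpand, hhalf]
    linarith
  exact neg_of_mul_neg_right hscaled (by positivity)

/-- For even `L ≥ 4`: `f̀_L(0) > 0`, `f̀_L(1/L) < 0`, and hence `f̀_L` has a root
`δ̀ ∈ (0, 1/L)` with `f̀_L > 0` on `[0, δ̀)`. -/
theorem stmt_19 (L : ℕ) (hL : 4 ≤ L) (hLe : Even L) :
    0 < fGrave L 0 ∧ fGrave L (1 / (L : ℝ)) < 0 ∧
    ∃ δg : ℝ, δg ∈ Set.Ioo 0 (1 / (L : ℝ)) ∧ fGrave L δg = 0 ∧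
      ∀ δ : ℝ, 0 ≤ δ → δ < δg → 0 < fGrave L δ := by
  have hpos := fGrave_zero_pos (L := L) (by omega)
  have hneg := fGrave_one_div_neg (by omega) hLe
  obtain ⟨δg, hδg, hroot, hbefore⟩ :=
    (continuous_fGrave L).continuousOn.exists_mem_Ioo_eq_zero_forall_pos (by positivity) hpos hneg
  exact ⟨hpos, hneg, δg, hδg, hroot, fun δ h0 hlt => hbefore δ ⟨h0, hlt⟩⟩
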